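/- arXiv:1706.05448 — 2 statements merged into one kernel-verified Lean document; each statement's English description precedes it below -/
import Mathlib

section
/- Among all planar regions of a given area, the disk centered at the facility minimizes the average Euclidean distance to the facility: for every r > 0 and every Lebesgue-measurable set S ⊆ ℝ² whose two-dimensional Lebesgue measure equals π·r² (the area of the disk B(0,r)), one has ∫_S ‖x‖ dx ≥ ∫_{B(0,r)} ‖x‖ dx = (2/3)·π·r³. -/
/-!
Layer cake: `∫_A f = ∫_0^∞ μ(A \ {f ≤ t}) dt` for `f ≥ 0`. Since `μ(A \ {f ≤ t}) ≥ μ A - μ {f ≤ t}`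
with equality when `A` is the sublevel set `{f ≤ r}` (the two sublevel sets are nested), every
set of measure `μ {f ≤ r}` carries at least the mass of `f` that `{f ≤ r}` does. For `f = ‖·‖`
on the plane, the same formula with `|{‖x‖ ≤ t}| = π t²` gives `∫_0^r π (r² - t²) dt = 2π r³ / 3`.
-/

open MeasureTheory Set

section Bathtub

variable {α : Type*} [MeasurableSpace α] {μ : Measure α} {f : α → ℝ}

theorem setLIntegral_ofReal_eq_lintegral_measure_sdiff_sublevel (hf : Measurable f)
    (hf₀ : ∀ x, 0 ≤ f x) (A : Set α) :
    ∫⁻ x in A, ENNReal.ofReal (f x) ∂μ = ∫⁻ t in Ioi 0, μ (A \ {x | f x ≤ t}) := by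
  rw [lintegral_eq_lintegral_meas_lt _ (.of_forall hf₀) hf.aemeasurable]
  refine lintegral_congr fun t => ?_
  rw [Measure.restrict_apply (measurableSet_lt measurable_const hf), inter_comm]
  congr 1
  ext x
  simp

theorem measure_sublevel_sdiff_sublevel (hf : Measurable f) {r : ℝ}
    (hr : μ {x | f x ≤ r} ≠ ⊤) (t : ℝ) :
    μ ({x | f x ≤ r} \ {x | f x ≤ t}) = μ {x | f x ≤ r} - μ {x | f x ≤ t} := by
  rcases le_or_gt t r with htr | hrt
  · have hsub : {x | f x ≤ t} ⊆ {x | f x ≤ r} := fun x hx => le_trans hx htr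
    exact measure_sdiff hsub (measurableSet_le hf measurable_const).nullMeasurableSet
      (ne_top_of_le_ne_top hr (measure_mono hsub))
  · have hsub : {x | f x ≤ r} ⊆ {x | f x ≤ t} := fun x hx => le_trans hx hrt.le
    rw [sdiff_eq_empty.mpr hsub, measure_empty, tsub_eq_zero_of_le (measure_mono hsub)]

theorem setLIntegral_sublevel_le (hf : Measurable f) (hf₀ : ∀ x, 0 ≤ f x) {r : ℝ}
    (hr : μ {x | f x ≤ r} ≠ ⊤) {S : Set α} (hS : μ S = μ {x | f x ≤ r}) :
    ∫⁻ x in {x | f x ≤ r}, ENNReal.ofReal (f x) ∂μ ≤ ∫⁻ x in S, ENNReal.ofReal (f x) ∂μ := by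
  simp only [setLIntegral_ofReal_eq_lintegral_measure_sdiff_sublevel hf hf₀]
  refine lintegral_mono fun t => ?_
  rw [measure_sublevel_sdiff_sublevel hf hr, ← hS]
  exact le_measure_sdiff

end Bathtub

theorem lintegral_Ioi_ofReal_sq_sub_sq {r : ℝ} (hr : 0 ≤ r) :
    ∫⁻ t in Ioi 0, ENNReal.ofReal (r ^ 2 - t ^ 2) = ENNReal.ofReal (2 / 3 * r ^ 3) := by
  have hnonpos : ∀ t ∈ Ioi r, ENNReal.ofReal (r ^ 2 - t ^ 2) = 0 := fun t (ht : r < t) => by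
    rw [ENNReal.ofReal_eq_zero]
    nlinarith
  calc ∫⁻ t in Ioi 0, ENNReal.ofReal (r ^ 2 - t ^ 2)
      = ∫⁻ t in Ioc 0 r, ENNReal.ofReal (r ^ 2 - t ^ 2) := by
        rw [← Ioc_union_Ioi_eq_Ioi hr, lintegral_union measurableSet_Ioi (Ioc_disjoint_Ioi le_rfl),
          setLIntegral_congr_fun measurableSet_Ioi hnonpos, lintegral_zero, add_zero]
    _ = ENNReal.ofReal (∫ t in 0..r, (r ^ 2 - t ^ 2)) := by
        rw [intervalIntegral.integral_of_le hr, ofReal_integral_eq_lintegral_ofReal]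
        · exact (continuous_const.sub (continuous_pow 2)).integrableOn_Ioc
        · refine (ae_restrict_iff' measurableSet_Ioc).mpr (.of_forall fun t ht => ?_)
          simp only [Pi.zero_apply, sub_nonneg]
          exact pow_le_pow_left₀ ht.1.le ht.2 2
    _ = ENNReal.ofReal (2 / 3 * r ^ 3) := by
        rw [intervalIntegral.integral_sub intervalIntegrable_const
          (intervalIntegral.intervalIntegrable_pow 2), intervalIntegral.integral_const,
          integral_pow, smul_eq_mul]
        ring_nf

theorem closedBall_zero_eq_setOf_norm_le {E : Type*} [SeminormedAddGroup E] (r : ℝ) :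
    Metric.closedBall (0 : E) r = {x | ‖x‖ ≤ r} := by
  ext x
  simp

local notation "ℝ²" => EuclideanSpace ℝ (Fin 2)

theorem volume_setOf_norm_le_fin_two {t : ℝ} (ht : 0 ≤ t) :
    volume {x : ℝ² | ‖x‖ ≤ t} = ENNReal.ofReal (Real.pi * t ^ 2) := by
  rw [← closedBall_zero_eq_setOf_norm_le, EuclideanSpace.volume_closedBall_fin_two,
    ← ENNReal.ofReal_pow ht, ← ENNReal.ofReal_mul (by positivity), mul_comm]

theorem setLIntegral_closedBall_norm_fin_two {r : ℝ} (hr : 0 ≤ r) :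
    ∫⁻ x in Metric.closedBall (0 : ℝ²) r, ENNReal.ofReal ‖x‖
      = ENNReal.ofReal (2 / 3 * Real.pi * r ^ 3) := by
  have hfin : volume {x : ℝ² | ‖x‖ ≤ r} ≠ ⊤ := by
    rw [volume_setOf_norm_le_fin_two hr]
    exact ENNReal.ofReal_ne_top
  rw [closedBall_zero_eq_setOf_norm_le,
    setLIntegral_ofReal_eq_lintegral_measure_sdiff_sublevel measurable_norm norm_nonneg]
  calc ∫⁻ t in Ioi 0, volume ({x : ℝ² | ‖x‖ ≤ r} \ {x | ‖x‖ ≤ t})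
      = ∫⁻ t in Ioi 0, ENNReal.ofReal Real.pi * ENNReal.ofReal (r ^ 2 - t ^ 2) := by
        refine setLIntegral_congr_fun measurableSet_Ioi fun t (ht : 0 < t) => ?_
        rw [measure_sublevel_sdiff_sublevel measurable_norm hfin,
          volume_setOf_norm_le_fin_two hr, volume_setOf_norm_le_fin_two ht.le,
          ← ENNReal.ofReal_sub _ (by positivity), ← ENNReal.ofReal_mul Real.pi_pos.le, mul_sub]
    _ = ENNReal.ofReal (2 / 3 * Real.pi * r ^ 3) := by
        rw [lintegral_const_mul _ (by fun_prop), lintegral_Ioi_ofReal_sq_sub_sq hr,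
          ← ENNReal.ofReal_mul Real.pi_pos.le]
        ring_nf

theorem disk_minimizes_average_distance_general
    (r : ℝ) (hr : 0 < r)
    (S : Set (EuclideanSpace ℝ (Fin 2)))
    (hvol : volume S = ENNReal.ofReal (Real.pi * r ^ 2)) :
    (∫⁻ x in Metric.closedBall (0 : EuclideanSpace ℝ (Fin 2)) r, ENNReal.ofReal ‖x‖)
      = ENNReal.ofReal (2 / 3 * Real.pi * r ^ 3) ∧
    (∫⁻ x in Metric.closedBall (0 : EuclideanSpace ℝ (Fin 2)) r, ENNReal.ofReal ‖x‖)
      ≤ ∫⁻ x in S, ENNReal.ofReal ‖x‖ := by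
  have hvol_ball := volume_setOf_norm_le_fin_two hr.le
  refine ⟨setLIntegral_closedBall_norm_fin_two hr.le, ?_⟩
  rw [closedBall_zero_eq_setOf_norm_le]
  exact setLIntegral_sublevel_le measurable_norm norm_nonneg
    (hvol_ball ▸ ENNReal.ofReal_ne_top) (hvol.trans hvol_ball.symm)

/-- Among all planar regions of a given area, the disk centered at the facility minimizes
the average Euclidean distance to the facility: any measurable `S ⊆ ℝ²` with the same
area `π·r²` as the disk `B(0,r)` satisfies `∫_S ‖x‖ dx ≥ ∫_{B(0,r)} ‖x‖ dx = (2/3)·π·r³`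
(integrals taken in `ℝ≥0∞` with respect to planar Lebesgue measure). -/
theorem disk_minimizes_average_distance
    (r : ℝ) (hr : 0 < r)
    (S : Set (EuclideanSpace ℝ (Fin 2))) (hS : MeasurableSet S)
    (hvol : volume S = ENNReal.ofReal (Real.pi * r ^ 2)) :
    (∫⁻ x in Metric.closedBall (0 : EuclideanSpace ℝ (Fin 2)) r, ENNReal.ofReal ‖x‖)
      = ENNReal.ofReal (2 / 3 * Real.pi * r ^ 3) ∧
    (∫⁻ x in Metric.closedBall (0 : EuclideanSpace ℝ (Fin 2)) r, ENNReal.ofReal ‖x‖)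
      ≤ ∫⁻ x in S, ENNReal.ofReal ‖x‖ :=
  disk_minimizes_average_distance_general r hr S hvol
end

section
/- The per-unit-area average-distance coefficients of the disk, regular hexagon, square and equilateral triangle are strictly increasing in that order: 2/(3√π) < ( 1/3 + (ln 3)/4 )·√(2/(3√3)) < ( √2 + ln(1+√2) )/6 < ( 3^{−1/4}/(3√3) )·( 2 + (√3/3)·ln(2+√3) ). (Numerically: 0.3761 < 0.3772 < 0.3826 < 0.4037.) -/
open Real Finset

/-- `log x ≥ 1 - 1/x` for positive `x`. -/
lemma aux_one_sub_inv_le_log {x : ℝ} (hx : 0 < x) : 1 - x⁻¹ ≤ Real.log x := by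
  have h := Real.log_le_sub_one_of_pos (inv_pos.mpr hx)
  rw [Real.log_inv] at h
  linarith

lemma aux_sqrt2_lb : (1.4142135 : ℝ) < Real.sqrt 2 := by
  rw [Real.lt_sqrt (by norm_num)]; norm_num

lemma aux_sqrt2_ub : Real.sqrt 2 < 1.4142136 := by
  rw [Real.sqrt_lt' (by norm_num)]; norm_num

lemma aux_sqrt3_lb : (1.7320508 : ℝ) < Real.sqrt 3 := by
  rw [Real.lt_sqrt (by norm_num)]; norm_num

lemma aux_sqrt3_ub : Real.sqrt 3 < 1.7320509 := by
  rw [Real.sqrt_lt' (by norm_num)]; norm_num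

lemma aux_sqrtpi_lb : (1.7724538 : ℝ) < Real.sqrt Real.pi := by
  rw [Real.lt_sqrt (by norm_num)]
  have h : (1.7724538 : ℝ) ^ 2 < 3.14159265358979323846 := by norm_num
  have := Real.pi_gt_d20
  linarith

/-- Bounds on `log (4/3)` via the power series of `log (1-x)` at `x = 1/4`. -/
lemma aux_log_four_thirds :
    (0.2876806 : ℝ) ≤ Real.log (4/3) ∧ Real.log (4/3) ≤ 0.2876833 := by
  have h := Real.abs_log_sub_add_sum_range_le (x := (1/4 : ℝ)) (by rw [abs_of_pos] <;> norm_num) 9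
  have hs : (∑ i ∈ Finset.range 9, ((1:ℝ)/4) ^ (i + 1) / (i + 1))
      = 47510881/165150720 := by
    simp [Finset.sum_range_succ]
    norm_num
  have h13 : Real.log (1 - (1:ℝ)/4) = - Real.log (4/3) := by
    rw [show (1 - (1:ℝ)/4) = ((4:ℝ)/3)⁻¹ by norm_num, Real.log_inv]
  rw [hs, h13] at h
  rw [abs_le] at h
  obtain ⟨h1, h2⟩ := h
  have he : |(1:ℝ)/4| ^ (9 + 1) / (1 - |(1:ℝ)/4|) = 1/786432 := by
    rw [abs_of_pos (by norm_num)]; norm_num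
  rw [he] at h1 h2
  constructor <;> linarith

lemma aux_log3 : (1.098611 : ℝ) < Real.log 3 ∧ Real.log 3 < 1.0986138 := by
  have h4 : Real.log (4/3) = Real.log 4 - Real.log 3 :=
    Real.log_div (by norm_num) (by norm_num)
  have h2 : Real.log 4 = 2 * Real.log 2 := by
    rw [show (4:ℝ) = 2^2 by norm_num, Real.log_pow]; push_cast; ring
  have hl := aux_log_four_thirds
  have hlo := Real.log_two_gt_d9
  have hhi := Real.log_two_lt_d9
  constructor
  · nlinarith [hl.2]
  · nlinarith [hl.1]

/-- Lower bound on the inner square root of the hexagon coefficient. -/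
lemma aux_hexsqrt_lb : (0.6204031 : ℝ) < Real.sqrt (2 / (3 * Real.sqrt 3)) := by
  rw [Real.lt_sqrt (by norm_num)]
  have h := aux_sqrt3_ub
  have h0 : (0:ℝ) < 3 * Real.sqrt 3 := by positivity
  rw [lt_div_iff₀ h0]
  nlinarith

lemma aux_hexsqrt_ub : Real.sqrt (2 / (3 * Real.sqrt 3)) < 0.6204034 := by
  rw [Real.sqrt_lt' (by norm_num)]
  have h := aux_sqrt3_lb
  have h0 : (0:ℝ) < 3 * Real.sqrt 3 := by positivity
  rw [div_lt_iff₀ h0]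
  nlinarith

lemma aux_log_one_add_sqrt2_lb : (0.864715 : ℝ) < Real.log (1 + Real.sqrt 2) := by
  have h1 : Real.log (2.4142135 : ℝ) ≤ Real.log (1 + Real.sqrt 2) := by
    apply Real.log_le_log (by norm_num)
    nlinarith [aux_sqrt2_lb]
  have h2 : Real.log (2.4142135 : ℝ) = Real.log 2 + Real.log 1.20710675 := by
    rw [← Real.log_mul (by norm_num) (by norm_num)]; norm_num
  have h3 : (1:ℝ) - (1.20710675 : ℝ)⁻¹ ≤ Real.log 1.20710675 :=
    aux_one_sub_inv_le_log (by norm_num)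
  have h4 := Real.log_two_gt_d9
  have h5 : ((1.20710675 : ℝ))⁻¹ < 0.8284272 := by norm_num
  linarith

lemma aux_log_one_add_sqrt2_ub : Real.log (1 + Real.sqrt 2) < 0.9898478 := by
  have h1 : Real.log (1 + Real.sqrt 2) ≤ Real.log (2.4142136 : ℝ) := by
    apply Real.log_le_log (by positivity)
    nlinarith [aux_sqrt2_ub]
  have h2 : Real.log (2.4142136 : ℝ) = 2 * Real.log 2 - Real.log ((4 : ℝ) / 2.4142136) := by
    rw [Real.log_div (by norm_num) (by norm_num)]
    rw [show (4:ℝ) = 2^2 by norm_num, Real.log_pow]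
    push_cast; ring
  have h3 : (1:ℝ) - ((4 : ℝ) / 2.4142136)⁻¹ ≤ Real.log ((4 : ℝ) / 2.4142136) :=
    aux_one_sub_inv_le_log (by norm_num)
  have h4 := Real.log_two_lt_d9
  have h5 : ((4 : ℝ) / 2.4142136)⁻¹ ≤ 0.6035534 := by norm_num
  linarith

lemma aux_log_two_add_sqrt3_lb : (1.314497 : ℝ) < Real.log (2 + Real.sqrt 3) := by
  have h1 : Real.log (3.7320508 : ℝ) ≤ Real.log (2 + Real.sqrt 3) := by
    apply Real.log_le_log (by norm_num)
    nlinarith [aux_sqrt3_lb]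
  have h2 : Real.log (3.7320508 : ℝ) = 2 * Real.log 2 - Real.log ((4 : ℝ) / 3.7320508) := by
    rw [Real.log_div (by norm_num) (by norm_num)]
    rw [show (4:ℝ) = 2^2 by norm_num, Real.log_pow]
    push_cast; ring
  have h3 : Real.log ((4 : ℝ) / 3.7320508) ≤ (4 : ℝ) / 3.7320508 - 1 :=
    Real.log_le_sub_one_of_pos (by norm_num)
  have h4 := Real.log_two_gt_d9
  have h5 : (4 : ℝ) / 3.7320508 - 1 ≤ 0.0717970 := by norm_num
  linarith

/-- `3 ^ (-(1)/4) = (√(√3))⁻¹`. -/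
lemma aux_rpow_eq : (3 : ℝ) ^ (-(1 : ℝ) / 4) = (Real.sqrt (Real.sqrt 3))⁻¹ := by
  have h1 : Real.sqrt (Real.sqrt 3) = (3 : ℝ) ^ ((1 : ℝ)/4) := by
    rw [Real.sqrt_eq_rpow, Real.sqrt_eq_rpow, ← Real.rpow_mul (by norm_num : (0:ℝ) ≤ 3)]
    norm_num
  rw [h1, ← Real.rpow_neg (by norm_num)]
  norm_num

lemma aux_sqrt_sqrt3_lb : (1.3160739 : ℝ) < Real.sqrt (Real.sqrt 3) := by
  rw [Real.lt_sqrt (by norm_num)]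
  nlinarith [aux_sqrt3_lb]

lemma aux_sqrt_sqrt3_ub : Real.sqrt (Real.sqrt 3) < 1.3160741 := by
  rw [Real.sqrt_lt' (by norm_num)]
  nlinarith [aux_sqrt3_ub]

/-- The per-unit-area average-distance coefficients `c_m` of the disk, regular hexagon,
square and equilateral triangle are strictly increasing in that order:
`2/(3√π) < (1/3 + (ln 3)/4)·√(2/(3√3)) < (√2 + ln(1+√2))/6
  < (3^(−1/4)/(3√3))·(2 + (√3/3)·ln(2+√3))`. -/
theorem shape_coefficients_strict_chain :
    2 / (3 * Real.sqrt Real.pi)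
      < (1 / 3 + Real.log 3 / 4) * Real.sqrt (2 / (3 * Real.sqrt 3)) ∧
    (1 / 3 + Real.log 3 / 4) * Real.sqrt (2 / (3 * Real.sqrt 3))
      < (Real.sqrt 2 + Real.log (1 + Real.sqrt 2)) / 6 ∧
    (Real.sqrt 2 + Real.log (1 + Real.sqrt 2)) / 6
      < (3 : ℝ) ^ (-(1 : ℝ) / 4) / (3 * Real.sqrt 3)
          * (2 + Real.sqrt 3 / 3 * Real.log (2 + Real.sqrt 3)) := by
  obtain ⟨hl3, hu3⟩ := aux_log3
  have hsl := aux_hexsqrt_lb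
  have hsu := aux_hexsqrt_ub
  refine ⟨?_, ?_, ?_⟩
  · -- disk < hexagon
    have hpi := aux_sqrtpi_lb
    have h1 : 2 / (3 * Real.sqrt Real.pi) < 2 / (3 * 1.7724538) := by
      apply div_lt_div_of_pos_left (by norm_num) (by norm_num)
      linarith
    have h2 : (0.6079860 : ℝ) * 0.6204031
        < (1 / 3 + Real.log 3 / 4) * Real.sqrt (2 / (3 * Real.sqrt 3)) := by
      apply mul_lt_mul'' (by linarith) (by linarith) (by norm_num) (by norm_num)
    nlinarith
  · -- hexagon < square
    have hs2 := aux_sqrt2_lb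
    have hlog := aux_log_one_add_sqrt2_lb
    have h1 : (1 / 3 + Real.log 3 / 4) * Real.sqrt (2 / (3 * Real.sqrt 3))
        < (0.6079868 : ℝ) * 0.6204034 := by
      apply mul_lt_mul'' (by linarith) (by linarith) (by positivity) (by positivity)
    nlinarith
  · -- square < triangle
    have hs2 := aux_sqrt2_ub
    have hlog := aux_log_one_add_sqrt2_ub
    have h1 : (Real.sqrt 2 + Real.log (1 + Real.sqrt 2)) / 6 < 0.400677 := by
      nlinarith
    rw [aux_rpow_eq]
    have h3l := aux_sqrt3_lb
    have h3u := aux_sqrt3_ub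
    have h4u := aux_sqrt_sqrt3_ub
    have h4l := aux_sqrt_sqrt3_lb
    have hL := aux_log_two_add_sqrt3_lb
    have hc : (0.146227 : ℝ) < (Real.sqrt (Real.sqrt 3))⁻¹ / (3 * Real.sqrt 3) := by
      rw [div_eq_mul_inv, ← mul_inv]
      rw [lt_inv_comm₀ (by norm_num) (by positivity)]
      nlinarith
    have hinner : (2.758925 : ℝ) < 2 + Real.sqrt 3 / 3 * Real.log (2 + Real.sqrt 3) := by
      have hd : (0.57735016 : ℝ) < Real.sqrt 3 / 3 := by nlinarith
      have hp : (0.57735016 : ℝ) * 1.314497 < Real.sqrt 3 / 3 * Real.log (2 + Real.sqrt 3) :=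
        mul_lt_mul'' hd hL (by norm_num) (by norm_num)
      nlinarith
    have hfin : (0.146227 : ℝ) * 2.758925
        < (Real.sqrt (Real.sqrt 3))⁻¹ / (3 * Real.sqrt 3)
          * (2 + Real.sqrt 3 / 3 * Real.log (2 + Real.sqrt 3)) :=
      mul_lt_mul'' hc hinner (by norm_num) (by norm_num)
    nlinarith
end
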